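/- arXiv:2107.08105 — 2 statements merged into one kernel-verified Lean document; each statement's English description precedes it below -/
import Mathlib

section
/- Let M, N be twice differentiable on (0,∞) and ℝ respectively, and set ψ(μ,ν) = (μ²+ν²)^{-1/2} M(μ)N(ν) for μ > 0. Then E²ψ = 0, where E² = (μ²+ν²)²[∂²/∂μ² + (μ²−ν²)/(μ(μ²+ν²)) ∂/∂μ + 2ν/(μ²+ν²) ∂/∂ν + ∂²/∂ν²], holds at (μ,ν) with M(μ)N(ν) ≠ 0 if and only if (M''(μ) − M'(μ)/μ)/M(μ) + N''(ν)/N(ν) = 0 at that point. -/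
/-!
Write `R = √(μ² + ν²)`. In either variable, the first two derivatives of `R⁻¹ f` are `R⁻¹` times
explicit combinations of `f`, `f'`, `f''`. Substituting them into `E²ψ`, the `N'` terms cancel,
the `M'` terms combine to `-M'/μ` and the zeroth-order terms cancel, so that
`E²ψ = R³ (N (M'' - M'/μ) + M N'')`, which vanishes iff its quotient by `M N` does.
-/

open Filter Topology

section InvSqrtWeight

variable {c x : ℝ}

theorem hasDerivAt_inv_sqrt_sq_add (h : 0 < x ^ 2 + c) :
    HasDerivAt (fun y => (√(y ^ 2 + c))⁻¹) (-(x / (x ^ 2 + c) * (√(x ^ 2 + c))⁻¹)) x := by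
  have hq : HasDerivAt (fun y => y ^ 2 + c) (2 * x) x := by
    simpa using (hasDerivAt_pow 2 x).add_const c
  have hr : √(x ^ 2 + c) ≠ 0 := (Real.sqrt_pos.mpr h).ne'
  refine ((hq.sqrt h.ne').inv hr).congr_deriv ?_
  have hr2 : √(x ^ 2 + c) ^ 2 = x ^ 2 + c := Real.sq_sqrt h.le
  field_simp
  rw [hr2]

theorem HasDerivAt.inv_sqrt_sq_add_mul {f : ℝ → ℝ} {f' : ℝ} (h : 0 < x ^ 2 + c)
    (hf : HasDerivAt f f' x) :
    HasDerivAt (fun y => (√(y ^ 2 + c))⁻¹ * f y)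
      ((√(x ^ 2 + c))⁻¹ * (f' - x / (x ^ 2 + c) * f x)) x := by
  refine ((hasDerivAt_inv_sqrt_sq_add h).mul hf).congr_deriv ?_
  ring

theorem deriv_deriv_inv_sqrt_sq_add_mul {f : ℝ → ℝ} (h : 0 < x ^ 2 + c)
    (hf : ∀ᶠ y in 𝓝 x, DifferentiableAt ℝ f y) (hf' : DifferentiableAt ℝ (deriv f) x) :
    deriv (deriv fun y => (√(y ^ 2 + c))⁻¹ * f y) x =
      (√(x ^ 2 + c))⁻¹ * (deriv (deriv f) x - 2 * x / (x ^ 2 + c) * deriv f x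
        + (3 * x ^ 2 / (x ^ 2 + c) ^ 2 - 1 / (x ^ 2 + c)) * f x) := by
  have hpos : ∀ᶠ y in 𝓝 x, 0 < y ^ 2 + c :=
    (isOpen_lt continuous_const (by fun_prop)).mem_nhds h
  have hderiv : deriv (fun y => (√(y ^ 2 + c))⁻¹ * f y) =ᶠ[𝓝 x]
      fun y => (√(y ^ 2 + c))⁻¹ * (deriv f y - y / (y ^ 2 + c) * f y) := by
    filter_upwards [hf, hpos] with y hfy hy
    exact (hfy.hasDerivAt.inv_sqrt_sq_add_mul hy).deriv
  have hquot : HasDerivAt (fun y => y / (y ^ 2 + c))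
      (1 / (x ^ 2 + c) - 2 * x ^ 2 / (x ^ 2 + c) ^ 2) x := by
    have hq : HasDerivAt (fun y => y ^ 2 + c) (2 * x) x := by
      simpa using (hasDerivAt_pow 2 x).add_const c
    refine ((hasDerivAt_id x).div hq h.ne').congr_deriv ?_
    simp only [id]
    field_simp
  have hinner : HasDerivAt (fun y => deriv f y - y / (y ^ 2 + c) * f y)
      (deriv (deriv f) x - ((1 / (x ^ 2 + c) - 2 * x ^ 2 / (x ^ 2 + c) ^ 2) * f x
        + x / (x ^ 2 + c) * deriv f x)) x :=
    hf'.hasDerivAt.sub (hquot.mul hf.self_of_nhds.hasDerivAt)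
  rw [hderiv.deriv_eq, (hinner.inv_sqrt_sq_add_mul h).deriv]
  field_simp
  ring

end InvSqrtWeight

theorem tangent_sphere_stokes_expansion {μ ν : ℝ} (w m dm ddm n dn ddn : ℝ) (hμ : μ ≠ 0)
    (hs : μ ^ 2 + ν ^ 2 ≠ 0) :
    (μ ^ 2 + ν ^ 2) ^ 2 *
        (w * (ddm * n - 2 * μ / (μ ^ 2 + ν ^ 2) * (dm * n)
              + (3 * μ ^ 2 / (μ ^ 2 + ν ^ 2) ^ 2 - 1 / (μ ^ 2 + ν ^ 2)) * (m * n))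
          + (μ ^ 2 - ν ^ 2) / (μ * (μ ^ 2 + ν ^ 2)) *
              (w * (dm * n - μ / (μ ^ 2 + ν ^ 2) * (m * n)))
          + 2 * ν / (μ ^ 2 + ν ^ 2) * (w * (m * dn - ν / (μ ^ 2 + ν ^ 2) * (m * n)))
          + w * (m * ddn - 2 * ν / (μ ^ 2 + ν ^ 2) * (m * dn)
              + (3 * ν ^ 2 / (μ ^ 2 + ν ^ 2) ^ 2 - 1 / (μ ^ 2 + ν ^ 2)) * (m * n))) =
      (μ ^ 2 + ν ^ 2) ^ 2 * w * ((ddm - dm / μ) * n + m * ddn) := by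
  field_simp
  ring

theorem tangent_sphere_R_separation (M N : ℝ → ℝ)
    (hM1 : ∀ x > 0, DifferentiableAt ℝ M x)
    (hM2 : ∀ x > 0, DifferentiableAt ℝ (deriv M) x)
    (hN1 : ∀ x : ℝ, DifferentiableAt ℝ N x)
    (hN2 : ∀ x : ℝ, DifferentiableAt ℝ (deriv N) x)
    (μ ν : ℝ) (hμ : 0 < μ) (hMN : M μ * N ν ≠ 0) :
    ((μ ^ 2 + ν ^ 2) ^ 2 *
      (deriv (deriv (fun m => (Real.sqrt (m ^ 2 + ν ^ 2))⁻¹ * M m * N ν)) μ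
        + (μ ^ 2 - ν ^ 2) / (μ * (μ ^ 2 + ν ^ 2)) *
            deriv (fun m => (Real.sqrt (m ^ 2 + ν ^ 2))⁻¹ * M m * N ν) μ
        + 2 * ν / (μ ^ 2 + ν ^ 2) *
            deriv (fun nn => (Real.sqrt (μ ^ 2 + nn ^ 2))⁻¹ * M μ * N nn) ν
        + deriv (deriv (fun nn => (Real.sqrt (μ ^ 2 + nn ^ 2))⁻¹ * M μ * N nn)) ν) = 0)
    ↔ (deriv (deriv M) μ - deriv M μ / μ) / M μ + deriv (deriv N) ν / N ν = 0 := by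
  have hs : 0 < μ ^ 2 + ν ^ 2 := by positivity
  have hψμ : (fun m => (√(m ^ 2 + ν ^ 2))⁻¹ * M m * N ν) =
      fun m => (√(m ^ 2 + ν ^ 2))⁻¹ * (M m * N ν) := by
    funext m; ring
  have hψν : (fun n => (√(μ ^ 2 + n ^ 2))⁻¹ * M μ * N n) =
      fun n => (√(n ^ 2 + μ ^ 2))⁻¹ * (M μ * N n) := by
    funext n; rw [add_comm (μ ^ 2)]; ring
  have hMμ : ∀ᶠ m in 𝓝 μ, DifferentiableAt ℝ (fun m => M m * N ν) m :=
    eventually_of_mem (Ioi_mem_nhds hμ) fun m hm => (hM1 m hm).mul_const _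
  have hNν : ∀ᶠ n in 𝓝 ν, DifferentiableAt ℝ (fun n => M μ * N n) n :=
    Eventually.of_forall fun n => (hN1 n).const_mul _
  have hMμ' : DifferentiableAt ℝ (deriv fun m => M m * N ν) μ := by
    rw [deriv_mul_const_field']; exact (hM2 μ hμ).mul_const _
  have hNν' : DifferentiableAt ℝ (deriv fun n => M μ * N n) ν := by
    rw [deriv_const_mul_field']; exact (hN2 ν).const_mul _
  rw [hψμ, hψν, deriv_deriv_inv_sqrt_sq_add_mul hs hMμ hMμ',
    deriv_deriv_inv_sqrt_sq_add_mul (by rwa [add_comm]) hNν hNν',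
    (hMμ.self_of_nhds.hasDerivAt.inv_sqrt_sq_add_mul hs).deriv,
    (hNν.self_of_nhds.hasDerivAt.inv_sqrt_sq_add_mul (by rwa [add_comm])).deriv]
  simp only [deriv_mul_const_field', deriv_const_mul_field']
  rw [add_comm (ν ^ 2)]
  have hM : M μ ≠ 0 := left_ne_zero_of_mul hMN
  have hN : N ν ≠ 0 := right_ne_zero_of_mul hMN
  rw [tangent_sphere_stokes_expansion _ _ _ _ _ _ _ hμ.ne' hs.ne', div_add_div _ _ hM hN,
    div_eq_zero_iff]
  simp [hs.ne', (Real.sqrt_pos.mpr hs).ne', hMN]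
end

section
/- Let M, N be twice differentiable on (0,∞) and set ψ(μ,ν) = (√2(μ²+ν²))⁻¹ M(μ)N(ν). Then the cardioid Stokes equation E²ψ = 0, where E² = (μ²+ν²)³[∂²/∂μ² + (3μ²−ν²)/(μ(μ²+ν²)) ∂/∂μ + (3ν²−μ²)/(ν(μ²+ν²)) ∂/∂ν + ∂²/∂ν²], holds at a point (μ,ν) with μ,ν > 0 and M(μ)N(ν) ≠ 0 if and only if (M''(μ) − M'(μ)/μ)/M(μ) + (N''(ν) − N'(ν)/ν)/N(ν) = 0 at that point. -/
/-! Write `ψ = (M(μ) N(ν) / √2) · w` with `w = (μ² + ν²)⁻¹` and expand `E²ψ` by the Leibniz rule.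
The first-order coefficients `(3μ² − ν²)/(μ(μ² + ν²))` and `(3ν² − μ²)/(ν(μ² + ν²))` are exactly
those for which the terms in `M w_μμ` and `M w_μ` cancel (likewise in `ν`), while the `M'` terms
combine to `−M'/μ`. Hence `E²ψ = (μ² + ν²)² / √2 · ((M'' − M'/μ) N + M (N'' − N'/ν))`, and one
divides by `M N`. -/

open Filter Topology

theorem deriv_deriv_mul {f g : ℝ → ℝ} {x : ℝ}
    (hf : ∀ᶠ y in 𝓝 x, DifferentiableAt ℝ f y) (hg : ∀ᶠ y in 𝓝 x, DifferentiableAt ℝ g y)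
    (hf' : DifferentiableAt ℝ (deriv f) x) (hg' : DifferentiableAt ℝ (deriv g) x) :
    deriv (deriv fun y => f y * g y) x
      = deriv (deriv f) x * g x + 2 * (deriv f x * deriv g x) + f x * deriv (deriv g) x := by
  have hderiv : deriv (fun y => f y * g y) =ᶠ[𝓝 x] fun y => deriv f y * g y + f y * deriv g y := by
    filter_upwards [hf, hg] with y hfy hgy
    exact deriv_fun_mul hfy hgy
  rw [hderiv.deriv_eq]
  have hsum := (hf'.hasDerivAt.fun_mul hg.self_of_nhds.hasDerivAt).fun_add
    (hf.self_of_nhds.hasDerivAt.fun_mul hg'.hasDerivAt)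
  rw [hsum.deriv]
  ring

section InvSqAdd

variable {k : ℝ}

theorem hasDerivAt_inv_sq_add (hk : 0 < k) (x : ℝ) :
    HasDerivAt (fun y => (y ^ 2 + k)⁻¹) (-(2 * x) / (x ^ 2 + k) ^ 2) x := by
  have hsq : HasDerivAt (fun y => y ^ 2 + k) (2 * x) x := by
    simpa using (hasDerivAt_pow 2 x).add_const k
  exact hsq.inv (by positivity)

theorem deriv_inv_sq_add (hk : 0 < k) :
    deriv (fun y => (y ^ 2 + k)⁻¹) = fun x => -(2 * x) / (x ^ 2 + k) ^ 2 :=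
  funext fun x => (hasDerivAt_inv_sq_add hk x).deriv

theorem deriv_deriv_inv_sq_add (hk : 0 < k) (x : ℝ) :
    deriv (deriv fun y => (y ^ 2 + k)⁻¹) x = (6 * x ^ 2 - 2 * k) / (x ^ 2 + k) ^ 3 := by
  have hsq : HasDerivAt (fun y => (y ^ 2 + k) ^ 2) (2 * (x ^ 2 + k) * (2 * x)) x := by
    simpa using ((hasDerivAt_pow 2 x).add_const k).fun_pow 2
  have hquot := ((hasDerivAt_id' x).const_mul 2).fun_neg.fun_div hsq (by positivity)
  rw [deriv_inv_sq_add hk, hquot.deriv]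
  field_simp
  ring

theorem deriv_inv_sq_add_mul (hk : 0 < k) {f : ℝ → ℝ} {x : ℝ} (hf : DifferentiableAt ℝ f x) :
    deriv (fun y => (y ^ 2 + k)⁻¹ * f y) x
      = (x ^ 2 + k)⁻¹ * deriv f x - 2 * x / (x ^ 2 + k) ^ 2 * f x := by
  rw [deriv_fun_mul (hasDerivAt_inv_sq_add hk x).differentiableAt hf, deriv_inv_sq_add hk]
  ring

theorem deriv_deriv_inv_sq_add_mul (hk : 0 < k) {f : ℝ → ℝ} {x : ℝ}
    (hf : ∀ᶠ y in 𝓝 x, DifferentiableAt ℝ f y) (hf' : DifferentiableAt ℝ (deriv f) x) :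
    deriv (deriv fun y => (y ^ 2 + k)⁻¹ * f y) x
      = (x ^ 2 + k)⁻¹ * deriv (deriv f) x - 4 * x / (x ^ 2 + k) ^ 2 * deriv f x
        + (6 * x ^ 2 - 2 * k) / (x ^ 2 + k) ^ 3 * f x := by
  have hw : ∀ y, DifferentiableAt ℝ (fun y => (y ^ 2 + k)⁻¹) y := fun y =>
    (hasDerivAt_inv_sq_add hk y).differentiableAt
  have hw' : DifferentiableAt ℝ (deriv fun y => (y ^ 2 + k)⁻¹) x := by
    rw [deriv_inv_sq_add hk]
    fun_prop (disch := positivity)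
  rw [deriv_deriv_mul (Eventually.of_forall hw) hf hw' hf', deriv_deriv_inv_sq_add hk,
    deriv_inv_sq_add hk]
  ring

end InvSqAdd

theorem cardioid_R_separation (M N : ℝ → ℝ)
    (hM1 : ∀ x > 0, DifferentiableAt ℝ M x)
    (hM2 : ∀ x > 0, DifferentiableAt ℝ (deriv M) x)
    (hN1 : ∀ x > 0, DifferentiableAt ℝ N x)
    (hN2 : ∀ x > 0, DifferentiableAt ℝ (deriv N) x)
    (μ ν : ℝ) (hμ : 0 < μ) (hν : 0 < ν) (hMN : M μ * N ν ≠ 0) :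
    ((μ ^ 2 + ν ^ 2) ^ 3 *
      (deriv (deriv (fun m => (Real.sqrt 2 * (m ^ 2 + ν ^ 2))⁻¹ * M m * N ν)) μ
        + (3 * μ ^ 2 - ν ^ 2) / (μ * (μ ^ 2 + ν ^ 2)) *
            deriv (fun m => (Real.sqrt 2 * (m ^ 2 + ν ^ 2))⁻¹ * M m * N ν) μ
        + (3 * ν ^ 2 - μ ^ 2) / (ν * (μ ^ 2 + ν ^ 2)) *
            deriv (fun nn => (Real.sqrt 2 * (μ ^ 2 + nn ^ 2))⁻¹ * M μ * N nn) ν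
        + deriv (deriv (fun nn => (Real.sqrt 2 * (μ ^ 2 + nn ^ 2))⁻¹ * M μ * N nn)) ν) = 0)
    ↔ (deriv (deriv M) μ - deriv M μ / μ) / M μ
        + (deriv (deriv N) ν - deriv N ν / ν) / N ν = 0 := by
  obtain ⟨hM, hN⟩ := mul_ne_zero_iff.mp hMN
  have hψμ : (fun m => (Real.sqrt 2 * (m ^ 2 + ν ^ 2))⁻¹ * M m * N ν)
      = fun m => N ν / Real.sqrt 2 * ((m ^ 2 + ν ^ 2)⁻¹ * M m) := by
    funext m; rw [mul_inv]; ring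
  have hψν : (fun n => (Real.sqrt 2 * (μ ^ 2 + n ^ 2))⁻¹ * M μ * N n)
      = fun n => M μ / Real.sqrt 2 * ((n ^ 2 + μ ^ 2)⁻¹ * N n) := by
    funext n; rw [mul_inv]; ring
  have hscale : (0 : ℝ) < (μ ^ 2 + ν ^ 2) ^ 2 / Real.sqrt 2 := by positivity
  simp only [hψμ, hψν, deriv_const_mul_field']
  rw [deriv_inv_sq_add_mul (by positivity) (hM1 μ hμ),
    deriv_inv_sq_add_mul (by positivity) (hN1 ν hν),
    deriv_deriv_inv_sq_add_mul (by positivity) (eventually_gt_nhds hμ |>.mono hM1) (hM2 μ hμ),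
    deriv_deriv_inv_sq_add_mul (by positivity) (eventually_gt_nhds hν |>.mono hN1) (hN2 ν hν),
    div_add_div _ _ hM hN, div_eq_zero_iff, or_iff_left hMN]
  refine Iff.trans (Eq.congr_left ?_) (mul_eq_zero_iff_left hscale.ne')
  field_simp
  ring
end
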